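/- For natural numbers m_1, m_2, n: if (d_1,...,d_{m_1}) ∈ D(m_1)_n and (e_1,...,e_{m_2}) ∈ D(m_2)_1, then the concatenated tuple lies in D(m_1+m_2)_{n+1}; that is, any product of n+2 entries drawn from {d_i} ∪ {e_j} vanishes. -/
import Mathlib


open Finset

/-- If `(d₁,...,d_{m₁}) ∈ D(m₁)_n` and `(e₁,...,e_{m₂}) ∈ D(m₂)_1`, then the
concatenated tuple lies in `D(m₁+m₂)_{n+1}`: every product of `n+2` entries drawn from
the concatenation (indices with repetition) vanishes. -/
theorem append_mem_D_succ {R : Type*} [CommRing R] (m₁ m₂ n : ℕ)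
    (d : Fin m₁ → R) (e : Fin m₂ → R)
    (hd : ∀ f : Fin (n + 1) → Fin m₁, ∏ i, d (f i) = 0)
    (he : ∀ g : Fin 2 → Fin m₂, ∏ i, e (g i) = 0) :
    ∀ h : Fin (n + 2) → Fin (m₁ + m₂), ∏ i, Fin.append d e (h i) = 0 := by
  intro h
  classical
  set F : Fin (n + 2) → R := fun i => Fin.append d e (h i) with hF
  set T : Finset (Fin (n + 2)) := Finset.univ.filter (fun i => m₁ ≤ (h i : ℕ)) with hT
  have key : ∃ s : Finset (Fin (n + 2)), s ⊆ Finset.univ ∧ (∏ i ∈ s, F i) = 0 := by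
    by_cases hc : 2 ≤ T.card
    · obtain ⟨s, hsT, hs⟩ := Finset.exists_subset_card_eq hc
      refine ⟨s, Finset.subset_univ s, ?_⟩
      have hos := s.orderIsoOfFin hs
      have hmem : ∀ k : Fin 2, m₁ ≤ ((h (hos k) : Fin (m₁ + m₂)) : ℕ) := by
        intro k
        have := hsT (hos k).2
        simp only [hT, Finset.mem_filter] at this
        exact this.2
      have hlt : ∀ k : Fin 2, ((h (hos k) : Fin (m₁ + m₂)) : ℕ) - m₁ < m₂ := by
        intro k
        have h1 := (h (hos k)).2
        have h2 := hmem k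
        omega
      set g : Fin 2 → Fin m₂ := fun k => ⟨((h (hos k)) : ℕ) - m₁, hlt k⟩ with hg
      have heval : ∀ k : Fin 2, F (hos k) = e (g k) := by
        intro k
        have : h (hos k) = Fin.natAdd m₁ (g k) := by
          apply Fin.ext
          simp [hg, Fin.natAdd]
          have := hmem k
          omega
        rw [hF]
        simp only [this, Fin.append_right]
      calc (∏ i ∈ s, F i) = ∏ k : Fin 2, F (hos k) := by
            rw [← Finset.prod_coe_sort s F]
            exact (Fintype.prod_equiv hos.toEquiv _ _ (fun k => rfl)).symm
        _ = ∏ k : Fin 2, e (g k) := by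
            exact Finset.prod_congr rfl (fun k _ => heval k)
        _ = 0 := he g
    · have hcompl : n + 1 ≤ Tᶜ.card := by
        have := Finset.card_compl T (α := Fin (n + 2))
        simp only [Fintype.card_fin] at this
        omega
      obtain ⟨s, hsT, hs⟩ := Finset.exists_subset_card_eq hcompl
      refine ⟨s, Finset.subset_univ s, ?_⟩
      have hos := s.orderIsoOfFin hs
      have hmem : ∀ k : Fin (n + 1), ((h (hos k) : Fin (m₁ + m₂)) : ℕ) < m₁ := by
        intro k
        have := hsT (hos k).2
        simp only [hT, Finset.mem_compl, Finset.mem_filter, Finset.mem_univ, true_and,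
          not_le] at this
        exact this
      set f : Fin (n + 1) → Fin m₁ := fun k => ⟨((h (hos k)) : ℕ), hmem k⟩ with hf
      have heval : ∀ k : Fin (n + 1), F (hos k) = d (f k) := by
        intro k
        have : h (hos k) = Fin.castAdd m₂ (f k) := by
          apply Fin.ext
          simp [hf, Fin.castAdd]
        rw [hF]
        simp only [this, Fin.append_left]
      calc (∏ i ∈ s, F i) = ∏ k : Fin (n + 1), F (hos k) := by
            rw [← Finset.prod_coe_sort s F]
            exact (Fintype.prod_equiv hos.toEquiv _ _ (fun k => rfl)).symm
        _ = ∏ k : Fin (n + 1), d (f k) := Finset.prod_congr rfl (fun k _ => heval k)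
        _ = 0 := hd f
  obtain ⟨s, hsu, hs0⟩ := key
  rw [← Finset.prod_sdiff hsu, hs0, mul_zero]
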